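/- Let n be a positive integer, let ν > 0 be a real number, let W be an n×n real symmetric matrix with tr W > 0, and let R be any n×n real symmetric matrix. Then the function h(t) := (σ₂(W + tR) − ν)/tr(W + tR) is twice differentiable at t = 0 and h''(0) ≤ − 2ν (tr R)² / (tr W)³. -/

import Mathlib

open Matrix

/-- σ₂ of a matrix: `((tr W)² − tr(W²))/2`. -/
noncomputable def sigma2 {n : ℕ} (W : Matrix (Fin n) (Fin n) ℝ) : ℝ :=
  ((W.trace) ^ 2 - (W * W).trace) / 2

/-!
Write `a = tr W`, `b = tr R`. The numerator `σ₂(W + tR) − ν` is quadratic in `t` and the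
denominator `a + tb` is affine, so the quotient rule gives
`a³ h''(0) = 2 (b² (σ₂ W − ν) − ab (tr W tr R − tr (WR)) + a² σ₂ R) = 2 σ₂(bW − aR) − 2νb²`,
by homogeneity of `σ₂`. The matrix `bW − aR` is symmetric and trace free, hence
`σ₂(bW − aR) = −tr((bW − aR)²)/2 ≤ 0`.
-/

open Filter Topology

section QuadraticOverAffine

variable (c₀ c₁ c₂ a b : ℝ)

theorem hasDerivAt_quadratic_div_affine {t : ℝ} (ht : a + t * b ≠ 0) :
    HasDerivAt (fun t => (c₀ + t * c₁ + t ^ 2 * c₂) / (a + t * b))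
      ((c₁ * a - c₀ * b + t * (2 * c₂ * a) + t ^ 2 * (c₂ * b)) / (a + t * b) ^ 2) t := by
  have hnum : HasDerivAt (fun t => c₀ + t * c₁ + t ^ 2 * c₂) (c₁ + 2 * t * c₂) t := by
    simpa using (((hasDerivAt_id t).mul_const c₁).const_add c₀).fun_add
      ((hasDerivAt_pow 2 t).mul_const c₂)
  have hden : HasDerivAt (fun t => a + t * b) b t := by
    simpa using ((hasDerivAt_id t).mul_const b).const_add a
  exact (hnum.div hden ht).congr_deriv (by ring)

variable {a}

theorem eventually_hasDerivAt_quadratic_div_affine (ha : a ≠ 0) :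
    ∀ᶠ t in 𝓝 0, HasDerivAt (fun t => (c₀ + t * c₁ + t ^ 2 * c₂) / (a + t * b))
      ((c₁ * a - c₀ * b + t * (2 * c₂ * a) + t ^ 2 * (c₂ * b)) / (a + t * b) ^ 2) t := by
  have hden : ∀ᶠ t in 𝓝 (0 : ℝ), a + t * b ≠ 0 :=
    (continuous_const.add (continuous_id.mul continuous_const)).continuousAt.eventually_ne
      (by simpa using ha)
  exact hden.mono fun t ht => hasDerivAt_quadratic_div_affine c₀ c₁ c₂ a b ht

theorem hasDerivAt_deriv_quadratic_div_affine (ha : a ≠ 0) :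
    HasDerivAt (deriv fun t => (c₀ + t * c₁ + t ^ 2 * c₂) / (a + t * b))
      (2 * (c₂ * a ^ 2 - c₁ * a * b + c₀ * b ^ 2) / a ^ 3) 0 := by
  have hnum : HasDerivAt (fun t => c₁ * a - c₀ * b + t * (2 * c₂ * a) + t ^ 2 * (c₂ * b))
      (2 * c₂ * a) 0 := by
    simpa using (((hasDerivAt_id (0 : ℝ)).mul_const (2 * c₂ * a)).const_add _).fun_add
      ((hasDerivAt_pow 2 (0 : ℝ)).mul_const (c₂ * b))
  have hden : HasDerivAt (fun t => (a + t * b) ^ 2) (2 * a * b) 0 := by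
    simpa using (((hasDerivAt_id (0 : ℝ)).mul_const b).const_add a).fun_pow 2
  have h := hnum.div hden (by simpa using ha)
  have hderiv := (eventually_hasDerivAt_quadratic_div_affine c₀ c₁ c₂ b ha).mono
    fun t ht => ht.deriv
  refine (h.congr_of_eventuallyEq hderiv).congr_deriv ?_
  simp only [zero_mul, add_zero, ne_eq, OfNat.ofNat_ne_zero, not_false_eq_true, zero_pow]
  field_simp
  ring

end QuadraticOverAffine

section Trace

variable {ι : Type*} [Fintype ι]

theorem trace_add_smul {α : Type*} [CommSemiring α] (W R : Matrix ι ι α) (t : α) :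
    (W + t • R).trace = W.trace + t * R.trace := by
  rw [trace_add, trace_smul, smul_eq_mul]

theorem trace_mul_self_nonneg_of_isSymm {M : Matrix ι ι ℝ} (hM : M.IsSymm) :
    0 ≤ (M * M).trace := by
  have hMM : M * M = Mᴴ * M := by rw [conjTranspose_eq_transpose_of_trivial, hM.eq]
  exact hMM ▸ (posSemidef_conjTranspose_mul_self M).trace_nonneg

end Trace

section Sigma2

variable {n : ℕ}

theorem sigma2_smul_add_smul (s t : ℝ) (W R : Matrix (Fin n) (Fin n) ℝ) :
    sigma2 (s • W + t • R) =
      s ^ 2 * sigma2 W + s * t * (W.trace * R.trace - (W * R).trace) + t ^ 2 * sigma2 R := by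
  simp only [sigma2, add_mul, mul_add, smul_mul_smul_comm, trace_add, trace_smul, smul_eq_mul,
    trace_mul_comm R W]
  ring

theorem sigma2_nonpos_of_isSymm_of_trace_eq_zero {M : Matrix (Fin n) (Fin n) ℝ} (hM : M.IsSymm)
    (htr : M.trace = 0) : sigma2 M ≤ 0 := by
  have := trace_mul_self_nonneg_of_isSymm hM
  rw [sigma2, htr]
  linarith

end Sigma2

theorem stmt3_general (n : ℕ) (ν : ℝ)
    (W R : Matrix (Fin n) (Fin n) ℝ)
    (hWsymm : W.IsSymm) (hRsymm : R.IsSymm) (htr : 0 < W.trace) :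
    (∀ᶠ t in nhds (0 : ℝ),
        DifferentiableAt ℝ (fun t : ℝ => (sigma2 (W + t • R) - ν) / (W + t • R).trace) t) ∧
      DifferentiableAt ℝ
        (deriv (fun t : ℝ => (sigma2 (W + t • R) - ν) / (W + t • R).trace)) 0 ∧
      deriv (deriv (fun t : ℝ => (sigma2 (W + t • R) - ν) / (W + t • R).trace)) 0
        ≤ -(2 * ν * (R.trace) ^ 2) / (W.trace) ^ 3 := by
  set a := W.trace
  set b := R.trace
  set c := a * b - (W * R).trace
  have hh : (fun t : ℝ => (sigma2 (W + t • R) - ν) / (W + t • R).trace) =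
      fun t => (sigma2 W - ν + t * c + t ^ 2 * sigma2 R) / (a + t * b) := by
    funext t
    rw [trace_add_smul, ← one_smul ℝ W, sigma2_smul_add_smul, one_smul]
    congr 1
    ring
  have hneg : sigma2 (b • W + (-a) • R) ≤ 0 :=
    sigma2_nonpos_of_isSymm_of_trace_eq_zero ((hWsymm.smul b).add (hRsymm.smul (-a)))
      (by rw [trace_add_smul, trace_smul, smul_eq_mul]; ring)
  rw [sigma2_smul_add_smul] at hneg
  have h2 := hasDerivAt_deriv_quadratic_div_affine (sigma2 W - ν) c (sigma2 R) b htr.ne'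
  rw [hh]
  refine ⟨(eventually_hasDerivAt_quadratic_div_affine _ _ _ b htr.ne').mono
    fun t ht => ht.differentiableAt, h2.differentiableAt, ?_⟩
  rw [h2.deriv]
  gcongr
  linear_combination 2 * hneg

/-- For `ν > 0`, symmetric `W` with `tr W > 0` and symmetric `R`, the function
`h(t) = (σ₂(W + tR) − ν)/tr(W + tR)` is twice differentiable at `t = 0` and
`h''(0) ≤ − 2ν (tr R)² / (tr W)³`. -/
theorem stmt3 (n : ℕ) (hn : 0 < n) (ν : ℝ) (hν : 0 < ν)
    (W R : Matrix (Fin n) (Fin n) ℝ)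
    (hWsymm : W.IsSymm) (hRsymm : R.IsSymm) (htr : 0 < W.trace) :
    (∀ᶠ t in nhds (0 : ℝ),
        DifferentiableAt ℝ (fun t : ℝ => (sigma2 (W + t • R) - ν) / (W + t • R).trace) t) ∧
      DifferentiableAt ℝ
        (deriv (fun t : ℝ => (sigma2 (W + t • R) - ν) / (W + t • R).trace)) 0 ∧
      deriv (deriv (fun t : ℝ => (sigma2 (W + t • R) - ν) / (W + t • R).trace)) 0
        ≤ -(2 * ν * (R.trace) ^ 2) / (W.trace) ^ 3 :=
  stmt3_general n ν W R hWsymm hRsymm htr
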